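/- arXiv:math/0509309 — 4 statements merged into one kernel-verified Lean document; each statement's English description precedes it below -/
import Mathlib

section
/- Let E be a real Banach space and S a C0-semigroup on E. If t, s ≥ 0 satisfy S(t) ≠ S(s), and one defines the operators R(t)f(x) := f(S(t)x) on the space of bounded uniformly continuous functions BUC(E), then there exists f ∈ BUC(E) with ‖f‖_∞ ≤ 1 and a point x₀ ∈ E such that |R(t)f(x₀) - R(s)f(x₀)| = 2. In particular ‖R(t) - R(s)‖ in the operator norm on BUC(E) equals 2. -/
open Real

theorem abs_sub_le_two_of_abs_le_one {α : Type*} {f : α → ℝ} (hf : ∀ z, |f z| ≤ 1) (a b : α) :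
    |f a - f b| ≤ 2 :=
  calc |f a - f b| ≤ |f a| + |f b| := abs_sub _ _
    _ ≤ 1 + 1 := add_le_add (hf a) (hf b)
    _ = 2 := one_add_one_eq_two

/-- With `φ (a - b) = 1`, the function `x ↦ cos (π φ (x - b))` takes the values `-1` at `a` and
`1` at `b`. -/
theorem exists_uniformContinuous_abs_le_one_abs_sub_eq_two {E : Type*} [AddCommGroup E]
    [Module ℝ E] [UniformSpace E] [IsUniformAddGroup E] [SeparatingDual ℝ E]
    {a b : E} (hab : a ≠ b) :
    ∃ f : E → ℝ, UniformContinuous f ∧ (∀ x, |f x| ≤ 1) ∧ |f a - f b| = 2 := by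
  obtain ⟨φ, hφ⟩ := SeparatingDual.exists_eq_one (R := ℝ) (sub_ne_zero.mpr hab)
  refine ⟨fun x => cos ((π • φ) (x - b)), ?_, fun x => abs_cos_le_one _, ?_⟩
  · exact lipschitzWith_cos.uniformContinuous.comp <|
      (π • φ).uniformContinuous.comp (uniformContinuous_id.sub uniformContinuous_const)
  · norm_num [hφ]

theorem stmt2_general {E : Type*} [NormedAddCommGroup E] [NormedSpace ℝ E]
    (S : ℝ → E →L[ℝ] E)
    (t s : ℝ) (hne : S t ≠ S s) :
    (∃ (f : E → ℝ) (x₀ : E), UniformContinuous f ∧ (∀ x, |f x| ≤ 1) ∧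
        |f (S t x₀) - f (S s x₀)| = 2) ∧
    IsGreatest {c : ℝ | ∃ (f : E → ℝ) (x : E), UniformContinuous f ∧ (∀ z, |f z| ≤ 1) ∧
        c = |f (S t x) - f (S s x)|} 2 := by
  obtain ⟨x₀, hx₀⟩ : ∃ x₀, S t x₀ ≠ S s x₀ := not_forall.mp (mt ContinuousLinearMap.ext hne)
  obtain ⟨f, hfu, hfb, hf2⟩ := exists_uniformContinuous_abs_le_one_abs_sub_eq_two hx₀
  refine ⟨⟨f, x₀, hfu, hfb, hf2⟩, ⟨f, x₀, hfu, hfb, hf2.symm⟩, ?_⟩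
  rintro c ⟨g, x, -, hgb, rfl⟩
  exact abs_sub_le_two_of_abs_le_one hgb _ _

/-- For a `C₀`-semigroup `S` on a real Banach space and `t, s ≥ 0` with `S t ≠ S s`,
considering the drift operators `R(τ)f = f ∘ S τ` on `BUC(E)`: there is an
`f ∈ BUC(E)` with `‖f‖_∞ ≤ 1` and a point `x₀` with `|R(t)f(x₀) - R(s)f(x₀)| = 2`;
in particular the operator norm `‖R(t) - R(s)‖` on `BUC(E)` equals `2`, i.e. `2` is
the greatest value of `|f (S t x) - f (S s x)|` over `f ∈ BUC(E)`, `‖f‖_∞ ≤ 1`, `x ∈ E`. -/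
theorem stmt2 {E : Type*} [NormedAddCommGroup E] [NormedSpace ℝ E] [CompleteSpace E]
    (S : ℝ → E →L[ℝ] E)
    (hS0 : S 0 = 1)
    (hSadd : ∀ t ≥ (0:ℝ), ∀ u ≥ (0:ℝ), S (t + u) = (S t).comp (S u))
    (hScont : ∀ x : E, ContinuousOn (fun t => S t x) (Set.Ici (0:ℝ)))
    (t s : ℝ) (ht : 0 ≤ t) (hs : 0 ≤ s) (hne : S t ≠ S s) :
    (∃ (f : E → ℝ) (x₀ : E), UniformContinuous f ∧ (∀ x, |f x| ≤ 1) ∧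
        |f (S t x₀) - f (S s x₀)| = 2) ∧
    IsGreatest {c : ℝ | ∃ (f : E → ℝ) (x : E), UniformContinuous f ∧ (∀ z, |f z| ≤ 1) ∧
        c = |f (S t x) - f (S s x)|} 2 :=
  stmt2_general S t s hne
end

section
/- Let A be a real d×d matrix, S(t) = e^{tA}, and define on L¹(ℝ^d) the operators R(t)f := f ∘ S(t). For all t > s ≥ 0 with S(t) ≠ S(s), the operator norm ‖e^{t·Tr A}R(t) - e^{s·Tr A}R(s)‖ on L¹(ℝ^d) equals 2. -/
open MeasureTheory NormedSpace

open scoped ENNReal NNReal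


theorem entryDeriv (d : ℕ) (A : Matrix (Fin d) (Fin d) ℝ) (i j : Fin d) :
    HasDerivAt (fun h : ℝ => NormedSpace.exp (h • A) i j) (A i j) 0 := by
  letI : SeminormedRing (Matrix (Fin d) (Fin d) ℝ) := Matrix.linftyOpSemiNormedRing
  letI : NormedRing (Matrix (Fin d) (Fin d) ℝ) := Matrix.linftyOpNormedRing
  letI : NormedAlgebra ℝ (Matrix (Fin d) (Fin d) ℝ) := Matrix.linftyOpNormedAlgebra
  have h1 : HasDerivAt (fun h : ℝ => NormedSpace.exp (h • A)) (A * NormedSpace.exp ((0:ℝ) • A)) 0 :=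
    hasDerivAt_exp_smul_const' A 0
  rw [zero_smul, exp_zero, mul_one] at h1
  let e : Matrix (Fin d) (Fin d) ℝ →L[ℝ] ℝ :=
    LinearMap.toContinuousLinearMap (Matrix.entryLinearMap ℝ ℝ i j)
  have h2 := e.hasFDerivAt.comp_hasDerivAt 0 h1
  exact h2

theorem detDerivZero (d : ℕ) (A : Matrix (Fin d) (Fin d) ℝ) :
    HasDerivAt (fun h : ℝ => (NormedSpace.exp (h • A)).det) A.trace 0 := by
  have key : ∀ h : ℝ, (NormedSpace.exp (h • A)).det
      = ∑ σ : Equiv.Perm (Fin d), ((Equiv.Perm.sign σ : ℤ) : ℝ) * ∏ i, NormedSpace.exp (h • A) (σ i) i := by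
    intro h; rw [Matrix.det_apply]
    refine Finset.sum_congr rfl fun σ _ => ?_
    rw [Units.smul_def, zsmul_eq_mul]
  simp_rw [key]
  have h1 : ∀ σ : Equiv.Perm (Fin d),
      HasDerivAt (fun h : ℝ => ∏ i, NormedSpace.exp (h • A) (σ i) i)
        (∑ i : Fin d, (∏ j ∈ Finset.univ.erase i, (1 : Matrix (Fin d) (Fin d) ℝ) (σ j) j) • A (σ i) i) 0 := by
    intro σ
    have := HasDerivAt.finset_prod (u := Finset.univ)
      (f := fun i (h : ℝ) => NormedSpace.exp (h • A) (σ i) i) (f' := fun i => A (σ i) i)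
      (fun i _ => entryDeriv d A (σ i) i)
    simpa [exp_zero, Finset.prod_fn] using this
  have h2 := HasDerivAt.sum (u := Finset.univ)
    (fun σ _ => (h1 σ).const_mul (((Equiv.Perm.sign σ : ℤ) : ℝ)))
  rw [Finset.sum_fn] at h2
  refine h2.congr_deriv (Eq.symm ?_)
  symm
  rw [Finset.sum_eq_single (1 : Equiv.Perm (Fin d))]
  · have hone : ∀ (x : Fin d), ∀ j ∈ Finset.univ.erase x,
        (1 : Matrix (Fin d) (Fin d) ℝ) ((1 : Equiv.Perm (Fin d)) j) j = 1 :=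
      fun x j _ => Matrix.one_apply_eq j
    simp only [Equiv.Perm.sign_one, Units.val_one, Int.cast_one, one_mul, smul_eq_mul,
      Matrix.trace, Matrix.diag]
    refine Finset.sum_congr rfl fun x _ => ?_
    rw [Finset.prod_congr rfl (hone x), Finset.prod_const_one, one_mul]
    simp
  · intro σ _ hσ
    have : ∀ i : Fin d, (∏ j ∈ Finset.univ.erase i, (1 : Matrix (Fin d) (Fin d) ℝ) (σ j) j) = 0 := by
      intro i
      -- find j ≠ i with σ j ≠ j
      obtain ⟨a, ha⟩ : ∃ a, σ a ≠ a := by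
        by_contra hc; push_neg at hc; exact hσ (Equiv.ext fun x => hc x)
      obtain ⟨j, hji, hj⟩ : ∃ j, j ≠ i ∧ σ j ≠ j := by
        by_cases hai : a = i
        · subst hai
          have hb : σ (σ a) ≠ σ a := by
            intro hcon
            exact ha (σ.injective hcon)
          exact ⟨σ a, ha, hb⟩
        · exact ⟨a, hai, ha⟩
      refine Finset.prod_eq_zero (Finset.mem_erase.2 ⟨hji, Finset.mem_univ j⟩) ?_
      exact Matrix.one_apply_ne hj
    simp [this]
  · simp

theorem det_exp_eq (d : ℕ) (A : Matrix (Fin d) (Fin d) ℝ) (u : ℝ) :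
    (NormedSpace.exp (u • A)).det = Real.exp (u * A.trace) := by
  set g : ℝ → ℝ := fun h => (NormedSpace.exp (h • A)).det with hg
  have hmul : ∀ x y : ℝ, g (x + y) = g x * g y := by
    intro x y
    have hcomm : Commute (x • A) (y • A) := ((Commute.refl A).smul_left x).smul_right y
    rw [hg]
    simp only
    rw [add_smul, Matrix.exp_add_of_commute _ _ hcomm, Matrix.det_mul]
  have hgderiv : ∀ u : ℝ, HasDerivAt g (g u * A.trace) u := by
    intro u
    have h0 : HasDerivAt (fun x : ℝ => g u * g (x - u)) (g u * (A.trace * 1)) u := by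
      have hshift : HasDerivAt (fun x : ℝ => x - u) 1 u := (hasDerivAt_id u).sub_const u
      have : HasDerivAt (fun x : ℝ => g (x - u)) (A.trace * 1) u := by
        have hz : u - u = 0 := sub_self u
        have hdz := (detDerivZero d A)
        rw [← hz] at hdz
        exact HasDerivAt.comp (h := fun x : ℝ => x - u) (h₂ := g) u hdz hshift
      exact this.const_mul (g u)
    have heq : (fun x : ℝ => g u * g (x - u)) = g := by
      funext x
      rw [← hmul, add_sub_cancel]
    rw [heq] at h0
    simpa using h0
  have hconst : ∀ u : ℝ, Real.exp (-(u * A.trace)) * g u = 1 := by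
    have hd : ∀ u : ℝ, HasDerivAt (fun v : ℝ => Real.exp (-(v * A.trace)) * g v) 0 u := by
      intro u
      have h1 : HasDerivAt (fun v : ℝ => Real.exp (-(v * A.trace)))
          (-A.trace * Real.exp (-(u * A.trace))) u := by
        have hl : HasDerivAt (fun v : ℝ => -(v * A.trace)) (-A.trace) u := by
          have := ((hasDerivAt_id' u).mul_const A.trace).neg
          simp only [one_mul] at this
          exact this
        simpa [mul_comm, Function.comp_def] using (Real.hasDerivAt_exp (-(u * A.trace))).comp u hl
      have := h1.mul (hgderiv u)
      exact this.congr_deriv (by ring)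
    intro u
    have : (fun v : ℝ => Real.exp (-(v * A.trace)) * g v) u
        = (fun v : ℝ => Real.exp (-(v * A.trace)) * g v) 0 :=
      is_const_of_deriv_eq_zero (fun v => (hd v).differentiableAt)
        (fun v => (hd v).deriv) u 0
    simpa [hg, exp_zero] using this
  have h := hconst u
  have hexp : Real.exp (-(u * A.trace)) ≠ 0 := Real.exp_ne_zero _
  field_simp [Real.exp_neg] at h
  rw [Real.exp_neg, inv_mul_eq_iff_eq_mul₀ (Real.exp_ne_zero _), mul_one] at h
  exact h

theorem comp_lintegral (d : ℕ) (M : Matrix (Fin d) (Fin d) ℝ) (hM : M.det ≠ 0)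
    (f : (Fin d → ℝ) → ℝ) (hf : AEStronglyMeasurable f (volume : Measure (Fin d → ℝ))) :
    ∫⁻ x, ‖f (Matrix.toLin' M x)‖₊ ∂(volume : Measure (Fin d → ℝ))
      = ENNReal.ofReal |M.det|⁻¹ * ∫⁻ y, ‖f y‖₊ ∂(volume : Measure (Fin d → ℝ)) := by
  have hdet : LinearMap.det (Matrix.toLin' M : (Fin d → ℝ) →ₗ[ℝ] (Fin d → ℝ)) = M.det := by
    exact LinearMap.det_toLin' M
  have hmap : Measure.map (Matrix.toLin' M) (volume : Measure (Fin d → ℝ))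
      = ENNReal.ofReal |M.det⁻¹| • volume := by
    have := Real.map_linearMap_volume_pi_eq_smul_volume_pi
      (f := (Matrix.toLin' M : (Fin d → ℝ) →ₗ[ℝ] (Fin d → ℝ))) (by rw [hdet]; exact hM)
    rwa [hdet] at this
  have hmeas : Measurable (Matrix.toLin' M : (Fin d → ℝ) → (Fin d → ℝ)) :=
    (LinearMap.continuous_of_finiteDimensional _).measurable
  have hg : AEMeasurable (fun y => (‖f y‖₊ : ℝ≥0∞)) (volume : Measure (Fin d → ℝ)) :=
    hf.enorm
  have hg' : AEMeasurable (fun y => (‖f y‖₊ : ℝ≥0∞))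
      (Measure.map (Matrix.toLin' M) (volume : Measure (Fin d → ℝ))) := by
    rw [hmap]; exact hg.smul_measure _
  rw [← lintegral_map' hg' hmeas.aemeasurable, hmap, lintegral_smul_measure, abs_inv, smul_eq_mul]

theorem map_vol (d : ℕ) (M : Matrix (Fin d) (Fin d) ℝ) (hM : M.det ≠ 0) :
    Measure.map (Matrix.toLin' M) (volume : Measure (Fin d → ℝ))
      = ENNReal.ofReal |M.det⁻¹| • volume := by
  have hdet : LinearMap.det (Matrix.toLin' M : (Fin d → ℝ) →ₗ[ℝ] (Fin d → ℝ)) = M.det :=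
    LinearMap.det_toLin' M
  have := Real.map_linearMap_volume_pi_eq_smul_volume_pi
    (f := (Matrix.toLin' M : (Fin d → ℝ) →ₗ[ℝ] (Fin d → ℝ))) (by rw [hdet]; exact hM)
  rwa [hdet] at this

theorem comp_ae (d : ℕ) (M : Matrix (Fin d) (Fin d) ℝ) (hM : M.det ≠ 0)
    {g g' : (Fin d → ℝ) → ℝ} (h : g =ᵐ[(volume : Measure (Fin d → ℝ))] g') :
    (fun x => g (Matrix.toLin' M x)) =ᵐ[(volume : Measure (Fin d → ℝ))]
      (fun x => g' (Matrix.toLin' M x)) := by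
  have hmeas : Measurable (Matrix.toLin' M : (Fin d → ℝ) → (Fin d → ℝ)) :=
    (LinearMap.continuous_of_finiteDimensional _).measurable
  have h' : ∀ᵐ y ∂(Measure.map (Matrix.toLin' M) (volume : Measure (Fin d → ℝ))),
      g y = g' y := by
    rw [map_vol d M hM]
    exact MeasureTheory.Measure.ae_smul_measure h _
  exact ae_of_ae_map hmeas.aemeasurable h'

theorem vol_preimage (d : ℕ) (M : Matrix (Fin d) (Fin d) ℝ) (hM : M.det ≠ 0)
    {B : Set (Fin d → ℝ)} (hB : MeasurableSet B) :
    (volume : Measure (Fin d → ℝ)) (Matrix.toLin' M ⁻¹' B)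
      = ENNReal.ofReal |M.det⁻¹| * volume B := by
  have hmeas : Measurable (Matrix.toLin' M : (Fin d → ℝ) → (Fin d → ℝ)) :=
    (LinearMap.continuous_of_finiteDimensional _).measurable
  rw [← Measure.map_apply hmeas hB, map_vol d M hM, Measure.smul_apply, smul_eq_mul]

theorem norm_comp (d : ℕ) (M : Matrix (Fin d) (Fin d) ℝ) (hM : M.det ≠ 0)
    (f g : Lp ℝ 1 (volume : Measure (Fin d → ℝ)))
    (hg : (g : (Fin d → ℝ) → ℝ) =ᵐ[volume] fun x => f (Matrix.toLin' M x)) :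
    ‖g‖ = |M.det|⁻¹ * ‖f‖ := by
  rw [Lp.norm_def, Lp.norm_def, eLpNorm_congr_ae hg,
    eLpNorm_one_eq_lintegral_enorm, eLpNorm_one_eq_lintegral_enorm]
  simp_rw [enorm_eq_nnnorm]
  rw [comp_lintegral d M hM f (Lp.aestronglyMeasurable f),
    ENNReal.toReal_mul, ENNReal.toReal_ofReal (by positivity)]


set_option maxHeartbeats 1000000 in
/-- For a real `d × d` matrix `A`, `S(t) = e^{tA}`, and the composition operators
`R(t) f = f ∘ S(t)` on `L¹(ℝ^d)`: for all `t > s ≥ 0` with `S(t) ≠ S(s)`,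
`‖e^{t·Tr A} R(t) - e^{s·Tr A} R(s)‖_{L(L¹)} = 2`. -/
theorem stmt7 (d : ℕ) (A : Matrix (Fin d) (Fin d) ℝ) (t s : ℝ) (hs : 0 ≤ s) (hst : s < t)
    (hne : NormedSpace.exp (t • A) ≠ NormedSpace.exp (s • A))
    (Rt Rs : Lp ℝ 1 (volume : Measure (Fin d → ℝ)) →L[ℝ] Lp ℝ 1 (volume : Measure (Fin d → ℝ)))
    (hRt : ∀ f : Lp ℝ 1 (volume : Measure (Fin d → ℝ)),
      (Rt f : (Fin d → ℝ) → ℝ) =ᵐ[volume] fun x => f (Matrix.toLin' (NormedSpace.exp (t • A)) x))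
    (hRs : ∀ f : Lp ℝ 1 (volume : Measure (Fin d → ℝ)),
      (Rs f : (Fin d → ℝ) → ℝ) =ᵐ[volume] fun x => f (Matrix.toLin' (NormedSpace.exp (s • A)) x)) :
    ‖Real.exp (t * A.trace) • Rt - Real.exp (s * A.trace) • Rs‖ = 2 := by
  set τ := A.trace with hτ
  set a := Real.exp (t * τ) with ha
  set b := Real.exp (s * τ) with hb
  have hapos : 0 < a := Real.exp_pos _
  have hbpos : 0 < b := Real.exp_pos _
  set Et := NormedSpace.exp (t • A) with hEt
  set Es := NormedSpace.exp (s • A) with hEs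
  have hdetEt : Et.det = a := det_exp_eq d A t
  have hdetEs : Es.det = b := det_exp_eq d A s
  have hdT : Et.det ≠ 0 := by rw [hdetEt]; exact hapos.ne'
  have hdS : Es.det ≠ 0 := by rw [hdetEs]; exact hbpos.ne'
  set T := a • Rt - b • Rs with hT
  -- norms of Rt f, Rs f
  have hnRt : ∀ f, ‖Rt f‖ = a⁻¹ * ‖f‖ := fun f => by
    have := norm_comp d Et hdT f (Rt f) (hRt f)
    rwa [hdetEt, abs_of_pos hapos] at this
  have hnRs : ∀ f, ‖Rs f‖ = b⁻¹ * ‖f‖ := fun f => by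
    have := norm_comp d Es hdS f (Rs f) (hRs f)
    rwa [hdetEs, abs_of_pos hbpos] at this
  -- upper bound
  have hub : ‖T‖ ≤ 2 := by
    refine ContinuousLinearMap.opNorm_le_bound _ (by norm_num) (fun f => ?_)
    have hTf : T f = a • (Rt f) - b • (Rs f) := by
      rw [hT]; simp
    rw [hTf]
    calc ‖a • Rt f - b • Rs f‖ ≤ ‖a • Rt f‖ + ‖b • Rs f‖ := norm_sub_le _ _
      _ = a * ‖Rt f‖ + b * ‖Rs f‖ := by
          rw [norm_smul, norm_smul, Real.norm_eq_abs, Real.norm_eq_abs,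
            abs_of_pos hapos, abs_of_pos hbpos]
      _ = ‖f‖ + ‖f‖ := by rw [hnRt, hnRs]; field_simp
      _ = 2 * ‖f‖ := by ring
  -- geometry: choose a ball whose preimages under the two flows are disjoint
  let Mt : (Fin d → ℝ) →L[ℝ] (Fin d → ℝ) := LinearMap.toContinuousLinearMap (Matrix.toLin' Et)
  let Ms : (Fin d → ℝ) →L[ℝ] (Fin d → ℝ) := LinearMap.toContinuousLinearMap (Matrix.toLin' Es)
  let D : (Fin d → ℝ) →L[ℝ] (Fin d → ℝ) := Mt - Ms
  have hlin : Matrix.toLin' Et ≠ Matrix.toLin' Es := fun hcon => hne (Matrix.toLin'.injective hcon)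
  obtain ⟨z, hz⟩ : ∃ z, Matrix.toLin' Et z ≠ Matrix.toLin' Es z := by
    by_contra hc; push_neg at hc; exact hlin (LinearMap.ext hc)
  have hMt : ∀ x, Mt x = Matrix.toLin' Et x := fun x => rfl
  have hMs : ∀ x, Ms x = Matrix.toLin' Es x := fun x => rfl
  have hDapp : ∀ x, D x = Matrix.toLin' Et x - Matrix.toLin' Es x := fun x => rfl
  have hDz : D z ≠ 0 := by rw [hDapp]; exact sub_ne_zero.2 hz
  set ε := ‖D z‖ with hεdef
  have hε : 0 < ε := norm_pos_iff.2 hDz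
  have hiu : IsUnit Es.det := isUnit_iff_ne_zero.2 hdS
  have hinv : ∀ x, Matrix.toLin' Es⁻¹ (Matrix.toLin' Es x) = x := by
    intro x
    have h1 : Es⁻¹ * Es = 1 := Matrix.nonsing_inv_mul Es hiu
    calc Matrix.toLin' Es⁻¹ (Matrix.toLin' Es x) = Matrix.toLin' (Es⁻¹ * Es) x := by
          rw [Matrix.toLin'_mul]; rfl
      _ = x := by rw [h1, Matrix.toLin'_one]; rfl
  let Msi : (Fin d → ℝ) →L[ℝ] (Fin d → ℝ) := LinearMap.toContinuousLinearMap (Matrix.toLin' Es⁻¹)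
  set C := ‖Msi‖ with hCdef
  have hC : 0 ≤ C := norm_nonneg _
  set r := ε / (3 + ‖D‖ * C) with hrdef
  have hden : 0 < 3 + ‖D‖ * C := by positivity
  have hr : 0 < r := div_pos hε hden
  set x₀ := Matrix.toLin' Es z with hx₀
  set B := Metric.ball x₀ r with hB
  have hdisj : ∀ x, Matrix.toLin' Et x ∈ B → Matrix.toLin' Es x ∈ B → False := by
    intro x h1 h2
    rw [hB, Metric.mem_ball, dist_eq_norm] at h1 h2
    have h2r : ‖D x‖ < 2 * r := by
      have hsplit : D x = (Matrix.toLin' Et x - x₀) - (Matrix.toLin' Es x - x₀) := by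
        rw [hDapp]; abel
      calc ‖D x‖ = ‖(Matrix.toLin' Et x - x₀) - (Matrix.toLin' Es x - x₀)‖ := by rw [hsplit]
        _ ≤ ‖Matrix.toLin' Et x - x₀‖ + ‖Matrix.toLin' Es x - x₀‖ := norm_sub_le _ _
        _ < r + r := add_lt_add h1 h2
        _ = 2 * r := by ring
    have hxz : ‖x - z‖ ≤ C * r := by
      have hxe : x - z = Msi (Matrix.toLin' Es x - x₀) := by
        have : Msi (Matrix.toLin' Es x - x₀)
            = Matrix.toLin' Es⁻¹ (Matrix.toLin' Es x) - Matrix.toLin' Es⁻¹ (Matrix.toLin' Es z) := by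
          rw [hx₀]; exact map_sub _ _ _
        rw [this, hinv, hinv]
      rw [hxe]
      calc ‖Msi (Matrix.toLin' Es x - x₀)‖ ≤ C * ‖Matrix.toLin' Es x - x₀‖ := Msi.le_opNorm _
        _ ≤ C * r := mul_le_mul_of_nonneg_left h2.le hC
    have hεle : ε ≤ ‖D x‖ + ‖D‖ * ‖x - z‖ := by
      have h1' : D z = D x + D (z - x) := by rw [map_sub]; abel
      calc ε = ‖D z‖ := rfl
        _ = ‖D x + D (z - x)‖ := by rw [h1']
        _ ≤ ‖D x‖ + ‖D (z - x)‖ := norm_add_le _ _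
        _ ≤ ‖D x‖ + ‖D‖ * ‖z - x‖ := add_le_add_right (D.le_opNorm _) _
        _ = ‖D x‖ + ‖D‖ * ‖x - z‖ := by rw [norm_sub_rev z x]
    have hfin : ε < (3 + ‖D‖ * C) * r := by
      have h3 : ‖D‖ * ‖x - z‖ ≤ ‖D‖ * (C * r) := mul_le_mul_of_nonneg_left hxz (norm_nonneg D)
      have h4 : ‖D‖ * (C * r) = ‖D‖ * C * r := by ring
      have h5 : (3 + ‖D‖ * C) * r = 3 * r + ‖D‖ * C * r := by ring
      linarith
    rw [hrdef, mul_div_cancel₀ _ hden.ne'] at hfin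
    exact lt_irrefl _ hfin
  -- the test function
  have hBmeas : MeasurableSet B := measurableSet_ball
  have hBfin : volume B ≠ ⊤ := measure_ball_lt_top.ne
  set f₀ : Lp ℝ 1 (volume : Measure (Fin d → ℝ)) := indicatorConstLp 1 hBmeas hBfin (1:ℝ) with hf₀
  have hBpos : 0 < volume B := Metric.measure_ball_pos volume x₀ hr
  have hf₀norm : ‖f₀‖ = (volume B).toReal := by
    rw [hf₀, norm_indicatorConstLp one_ne_zero ENNReal.one_ne_top]
    simp
    rfl
  set U := Matrix.toLin' Et ⁻¹' B with hU
  set V := Matrix.toLin' Es ⁻¹' B with hV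
  have hmeasEt : Measurable (Matrix.toLin' Et : (Fin d → ℝ) → (Fin d → ℝ)) :=
    (LinearMap.continuous_of_finiteDimensional _).measurable
  have hmeasEs : Measurable (Matrix.toLin' Es : (Fin d → ℝ) → (Fin d → ℝ)) :=
    (LinearMap.continuous_of_finiteDimensional _).measurable
  have hUmeas : MeasurableSet U := hmeasEt hBmeas
  have hVmeas : MeasurableSet V := hmeasEs hBmeas
  -- a.e. description of T f₀
  have hcoe : (T f₀ : (Fin d → ℝ) → ℝ) =ᵐ[volume]
      fun x => a * U.indicator (fun _ => (1:ℝ)) x - b * V.indicator (fun _ => (1:ℝ)) x := by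
    have hTf : T f₀ = a • (Rt f₀) - b • (Rs f₀) := by rw [hT]; simp
    have h1 : (T f₀ : (Fin d → ℝ) → ℝ) =ᵐ[volume]
        fun x => a * (Rt f₀ : (Fin d → ℝ) → ℝ) x - b * (Rs f₀ : (Fin d → ℝ) → ℝ) x := by
      rw [hTf]
      filter_upwards [Lp.coeFn_sub (a • (Rt f₀)) (b • (Rs f₀)),
        Lp.coeFn_smul a (Rt f₀), Lp.coeFn_smul b (Rs f₀)] with x hx1 hx2 hx3
      rw [hx1]; simp [hx2, hx3]
    have hcompT : (fun x => (f₀ : (Fin d → ℝ) → ℝ) (Matrix.toLin' Et x)) =ᵐ[volume]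
        fun x => U.indicator (fun _ => (1:ℝ)) x := by
      have := comp_ae d Et hdT (indicatorConstLp_coeFn (p := 1)
        (μ := (volume : Measure (Fin d → ℝ))) (hs := hBmeas) (hμs := hBfin) (c := (1:ℝ)))
      refine this.trans (Filter.EventuallyEq.of_eq ?_)
      funext x
      by_cases hx : Matrix.toLin' Et x ∈ B
      · rw [Set.indicator_of_mem hx, Set.indicator_of_mem (show x ∈ U from hx)]
      · rw [Set.indicator_of_notMem hx, Set.indicator_of_notMem (show x ∉ U from hx)]
    have hcompS : (fun x => (f₀ : (Fin d → ℝ) → ℝ) (Matrix.toLin' Es x)) =ᵐ[volume]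
        fun x => V.indicator (fun _ => (1:ℝ)) x := by
      have := comp_ae d Es hdS (indicatorConstLp_coeFn (p := 1)
        (μ := (volume : Measure (Fin d → ℝ))) (hs := hBmeas) (hμs := hBfin) (c := (1:ℝ)))
      refine this.trans (Filter.EventuallyEq.of_eq ?_)
      funext x
      by_cases hx : Matrix.toLin' Es x ∈ B
      · rw [Set.indicator_of_mem hx, Set.indicator_of_mem (show x ∈ V from hx)]
      · rw [Set.indicator_of_notMem hx, Set.indicator_of_notMem (show x ∉ V from hx)]
    filter_upwards [h1, (hRt f₀).trans hcompT, (hRs f₀).trans hcompS] with x hx1 hx2 hx3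
    rw [hx1, hx2, hx3]
  -- norm of T f₀
  have hTf₀norm : ‖T f₀‖ = 2 * (volume B).toReal := by
    rw [Lp.norm_def, eLpNorm_congr_ae hcoe, eLpNorm_one_eq_lintegral_enorm]
    simp_rw [enorm_eq_nnnorm]
    have hpt : (fun x => (‖a * U.indicator (fun _ => (1:ℝ)) x - b * V.indicator (fun _ => (1:ℝ)) x‖₊ : ℝ≥0∞))
        = fun x => U.indicator (fun _ => ENNReal.ofReal a) x + V.indicator (fun _ => ENNReal.ofReal b) x := by
      funext x
      by_cases hxU : x ∈ U
      · have hxV : x ∉ V := fun hxV => hdisj x hxU hxV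
        simp only [Set.indicator_of_mem hxU, Set.indicator_of_notMem hxV, mul_one, mul_zero,
          sub_zero, add_zero]
        exact Real.enorm_eq_ofReal hapos.le
      · by_cases hxV : x ∈ V
        · simp only [Set.indicator_of_notMem hxU, Set.indicator_of_mem hxV, mul_one, mul_zero,
            zero_sub, nnnorm_neg, zero_add]
          exact Real.enorm_eq_ofReal hbpos.le
        · simp [Set.indicator_of_notMem, hxU, hxV]
    rw [hpt, lintegral_add_left (measurable_const.indicator hUmeas),
      lintegral_indicator_const hUmeas, lintegral_indicator_const hVmeas]
    have hvolU : volume U = ENNReal.ofReal a⁻¹ * volume B := by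
      rw [hU, vol_preimage d Et hdT hBmeas, hdetEt, abs_of_pos (by positivity)]
    have hvolV : volume V = ENNReal.ofReal b⁻¹ * volume B := by
      rw [hV, vol_preimage d Es hdS hBmeas, hdetEs, abs_of_pos (by positivity)]
    rw [hvolU, hvolV, ← mul_assoc, ← mul_assoc,
      ← ENNReal.ofReal_mul hapos.le, ← ENNReal.ofReal_mul hbpos.le,
      mul_inv_cancel₀ hapos.ne', mul_inv_cancel₀ hbpos.ne', ENNReal.ofReal_one, one_mul]
    rw [ENNReal.toReal_add hBfin hBfin]
    ring
  -- lower bound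
  have hlb : 2 ≤ ‖T‖ := by
    have h := T.le_opNorm f₀
    rw [hTf₀norm, hf₀norm] at h
    have hpos : 0 < (volume B).toReal := ENNReal.toReal_pos hBpos.ne' hBfin
    exact le_of_mul_le_mul_right (by linarith) hpos
  exact le_antisymm hub hlb
end

section
/- Let γ_n be the standard Gaussian measure on ℝⁿ and let Δ_n be the Laplacian. For λ ∈ ℂ with Re λ < 0, define f_{n,λ}(ξ) = exp((λ/n)|ξ|²) and g_{n,λ}(ξ) = (-2λ²|ξ|²/n²) f_{n,λ}(ξ). Then (λ - ½Δ_n) f_{n,λ} = g_{n,λ}, ‖f_{n,λ}‖_∞ = 1, and ‖g_{n,λ}‖_∞ = 2|λ|²/(n e |Re λ|). In particular ‖(λ - ½Δ_n) f_{n,λ}‖_∞ → 0 as n → ∞. -/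
open Filter Topology

/-- The Laplacian `Δf(ξ) = ∑ i ∂²f/∂ξᵢ²` of a function on `ℝⁿ`. -/
noncomputable def lap {n : ℕ} (f : EuclideanSpace ℝ (Fin n) → ℂ)
    (ξ : EuclideanSpace ℝ (Fin n)) : ℂ :=
  ∑ i : Fin n, fderiv ℝ (fun x => fderiv ℝ f x (EuclideanSpace.single i 1)) ξ
    (EuclideanSpace.single i 1)

/-- `f_{n,λ}(ξ) = exp((λ/n)|ξ|²)`. -/
noncomputable def fnl (n : ℕ) (l : ℂ) (ξ : EuclideanSpace ℝ (Fin n)) : ℂ :=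
  Complex.exp ((l / n) * (‖ξ‖ : ℂ) ^ 2)

/-- `g_{n,λ}(ξ) = (-2λ²|ξ|²/n²) f_{n,λ}(ξ)`. -/
noncomputable def gnl (n : ℕ) (l : ℂ) (ξ : EuclideanSpace ℝ (Fin n)) : ℂ :=
  (-2 * l ^ 2 * (‖ξ‖ : ℂ) ^ 2 / (n : ℂ) ^ 2) * fnl n l ξ

noncomputable def D1 (n : ℕ) (l : ℂ) (ξ : EuclideanSpace ℝ (Fin n)) :
    EuclideanSpace ℝ (Fin n) →L[ℝ] ℂ :=
  (fnl n l ξ) • ((l / n) • (Complex.ofRealCLM.comp (2 • innerSL ℝ ξ)))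

lemma fnl_eq (n : ℕ) (l : ℂ) (ξ : EuclideanSpace ℝ (Fin n)) :
    fnl n l ξ = Complex.exp ((l / n) * ((‖ξ‖ ^ 2 : ℝ) : ℂ)) := by
  rw [fnl]; norm_cast

lemma hasFDerivAt_fnl (n : ℕ) (l : ℂ) (ξ : EuclideanSpace ℝ (Fin n)) :
    HasFDerivAt (fnl n l) (D1 n l ξ) ξ := by
  have h1 : HasFDerivAt (fun x : EuclideanSpace ℝ (Fin n) => ‖x‖ ^ 2)
      (2 • innerSL ℝ ξ) ξ := (hasStrictFDerivAt_norm_sq ξ).hasFDerivAt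
  have h2 := (Complex.ofRealCLM.hasFDerivAt.comp ξ h1).const_mul (l / n)
  have h4 := h2.cexp
  simp only [Function.comp_def, Complex.ofRealCLM_apply] at h4
  have : (fun x : EuclideanSpace ℝ (Fin n) =>
      Complex.exp (l / n * ((‖x‖ ^ 2 : ℝ) : ℂ))) = fnl n l := by
    funext x; rw [fnl_eq]
  rw [this] at h4
  rw [D1, fnl_eq]
  exact h4

lemma D1_apply (n : ℕ) (l : ℂ) (ξ v : EuclideanSpace ℝ (Fin n)) :
    D1 n l ξ v = fnl n l ξ * (l / n * (2 * ((inner ℝ ξ v : ℝ) : ℂ))) := by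
  simp [D1, smul_eq_mul]

lemma fderiv_fnl_single (n : ℕ) (l : ℂ) (i : Fin n) (x : EuclideanSpace ℝ (Fin n)) :
    fderiv ℝ (fnl n l) x (EuclideanSpace.single i 1) =
      (2 * (l / n) * (x i : ℂ)) * fnl n l x := by
  rw [(hasFDerivAt_fnl n l x).fderiv, D1_apply]
  have : (inner ℝ x (EuclideanSpace.single i (1:ℝ)) : ℝ) = x i := by
    rw [EuclideanSpace.inner_single_right]; simp
  rw [this]; ring

lemma lap_term (n : ℕ) (l : ℂ) (i : Fin n) (ξ : EuclideanSpace ℝ (Fin n)) :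
    fderiv ℝ (fun x => fderiv ℝ (fnl n l) x (EuclideanSpace.single i 1)) ξ
      (EuclideanSpace.single i 1) =
      2 * (l / n) * fnl n l ξ + (2 * (l / n) * (ξ i : ℂ)) ^ 2 * fnl n l ξ := by
  have hfun : (fun x => fderiv ℝ (fnl n l) x (EuclideanSpace.single i 1)) =
      fun x => (2 * (l / n) * ((x i : ℝ) : ℂ)) * fnl n l x := by
    funext x; exact fderiv_fnl_single n l i x
  have hcoord : HasFDerivAt (fun x : EuclideanSpace ℝ (Fin n) => ((x i : ℝ) : ℂ))
      (Complex.ofRealCLM.comp (innerSL ℝ (EuclideanSpace.single i (1:ℝ)))) ξ := by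
    have := Complex.ofRealCLM.hasFDerivAt.comp ξ
      ((innerSL ℝ (EuclideanSpace.single i (1:ℝ))).hasFDerivAt (x := ξ))
    convert this using 2 with x
    simp only [Function.comp_def, ContinuousLinearMap.coe_comp',
      Complex.ofRealCLM_apply, innerSL_apply_apply]
    rfl
    rfl
    simp only [Function.comp_apply, Complex.ofRealCLM_apply, innerSL_apply_apply]
    rw [EuclideanSpace.inner_single_left]; simp
  have hc : HasFDerivAt (fun x : EuclideanSpace ℝ (Fin n) => 2 * (l / n) * ((x i : ℝ) : ℂ))
      ((2 * (l / n)) • (Complex.ofRealCLM.comp (innerSL ℝ (EuclideanSpace.single i (1:ℝ))))) ξ :=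
    hcoord.const_mul _
  have hG : HasFDerivAt (fun x => 2 * (l / n) * ((x i : ℝ) : ℂ) * fnl n l x) _ ξ :=
    hc.mul (hasFDerivAt_fnl n l ξ)
  rw [hfun, hG.fderiv]
  simp only [ContinuousLinearMap.add_apply, ContinuousLinearMap.smul_apply,
    ContinuousLinearMap.coe_comp', Function.comp_apply, Complex.ofRealCLM_apply,
    innerSL_apply_apply, smul_eq_mul, D1_apply]
  have h1 : (inner ℝ (EuclideanSpace.single i (1:ℝ)) (EuclideanSpace.single i (1:ℝ)) : ℝ) = 1 := by
    rw [EuclideanSpace.inner_single_left]; simp [EuclideanSpace.single_apply]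
  have h2 : (inner ℝ ξ (EuclideanSpace.single i (1:ℝ)) : ℝ) = ξ i := by
    rw [EuclideanSpace.inner_single_right]; simp
  rw [h1, h2]
  push_cast
  ring

lemma norm_sq_eq_sum (n : ℕ) (ξ : EuclideanSpace ℝ (Fin n)) :
    ‖ξ‖ ^ 2 = ∑ i : Fin n, (ξ i) ^ 2 := by
  rw [EuclideanSpace.norm_eq, Real.sq_sqrt (by positivity)]
  simp [sq_abs]

lemma lap_fnl (n : ℕ) (l : ℂ) (ξ : EuclideanSpace ℝ (Fin n)) :
    lap (fnl n l) ξ = (n : ℂ) * (2 * (l / n)) * fnl n l ξ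
      + 4 * (l / n) ^ 2 * (‖ξ‖ : ℂ) ^ 2 * fnl n l ξ := by
  rw [lap]
  simp only [lap_term]
  rw [Finset.sum_add_distrib, Finset.sum_const, Finset.card_univ, Fintype.card_fin,
    nsmul_eq_mul]
  have hsum : ((‖ξ‖ : ℂ)) ^ 2 = ∑ i : Fin n, ((ξ i : ℝ) : ℂ) ^ 2 := by
    have := norm_sq_eq_sum n ξ
    push_cast [← this]
    norm_cast
  have h2 : ∑ i : Fin n, (2 * (l / n) * ((ξ i : ℝ) : ℂ)) ^ 2 * fnl n l ξ
      = 4 * (l / n) ^ 2 * (∑ i : Fin n, ((ξ i : ℝ) : ℂ) ^ 2) * fnl n l ξ := by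
    rw [Finset.mul_sum, Finset.sum_mul]
    exact Finset.sum_congr rfl (fun i _ => by ring)
  rw [h2, ← hsum]
  ring

lemma part1 (l : ℂ) (n : ℕ) (hn : 0 < n) (ξ : EuclideanSpace ℝ (Fin n)) :
    l * fnl n l ξ - (1 / 2) * lap (fnl n l) ξ = gnl n l ξ := by
  rw [lap_fnl, gnl]
  have hn' : (n : ℂ) ≠ 0 := Nat.cast_ne_zero.mpr hn.ne'
  field_simp
  ring

lemma abs_fnl (n : ℕ) (l : ℂ) (ξ : EuclideanSpace ℝ (Fin n)) :
    ‖fnl n l ξ‖ = Real.exp (l.re * ‖ξ‖ ^ 2 / n) := by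
  rw [fnl, Complex.norm_exp]
  congr 1
  have : l / n * (‖ξ‖ : ℂ) ^ 2 = ((‖ξ‖ ^ 2 / n : ℝ) : ℂ) * l := by
    push_cast; ring
  rw [this, Complex.re_ofReal_mul]
  ring

lemma abs_gnl (n : ℕ) (l : ℂ) (ξ : EuclideanSpace ℝ (Fin n)) :
    ‖gnl n l ξ‖ =
      2 * ‖l‖ ^ 2 * ‖ξ‖ ^ 2 / n ^ 2 * Real.exp (l.re * ‖ξ‖ ^ 2 / n) := by
  rw [gnl, norm_mul, abs_fnl]
  congr 1
  rw [norm_div, norm_mul, norm_mul, norm_pow, norm_pow]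
  simp [abs_of_nonneg (norm_nonneg ξ)]

lemma key_ineq (c : ℝ) (hc : 0 < c) (r : ℝ) :
    r * Real.exp (-(c * r)) ≤ 1 / (c * Real.exp 1) := by
  have h := Real.add_one_le_exp (c * r - 1)
  rw [Real.exp_sub] at h
  have h' : c * r * Real.exp 1 ≤ Real.exp (c * r) := by
    rw [← le_div_iff₀ (Real.exp_pos 1)]
    linarith
  rw [Real.exp_neg, ← div_eq_mul_inv, div_le_div_iff₀ (Real.exp_pos _) (by positivity)]
  nlinarith

lemma part2 (l : ℂ) (hl : l.re < 0) (n : ℕ) (hn : 0 < n) :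
    (⨆ ξ : EuclideanSpace ℝ (Fin n), ‖fnl n l ξ‖) = 1 := by
  have hb : ∀ ξ : EuclideanSpace ℝ (Fin n), ‖fnl n l ξ‖ ≤ 1 := by
    intro ξ
    rw [abs_fnl, Real.exp_le_one_iff]
    have : l.re * ‖ξ‖ ^ 2 ≤ 0 := mul_nonpos_of_nonpos_of_nonneg hl.le (by positivity)
    exact div_nonpos_of_nonpos_of_nonneg this (Nat.cast_nonneg n)
  apply le_antisymm
  · exact ciSup_le hb
  · have h0 : ‖fnl n l 0‖ = 1 := by
      rw [abs_fnl]; simp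
    rw [← h0]
    exact le_ciSup ⟨1, Set.forall_mem_range.mpr hb⟩ 0

lemma abs_gnl_le (l : ℂ) (hl : l.re < 0) (n : ℕ) (hn : 0 < n)
    (ξ : EuclideanSpace ℝ (Fin n)) :
    ‖gnl n l ξ‖ ≤ 2 * ‖l‖ ^ 2 / (n * Real.exp 1 * |l.re|) := by
  rw [abs_gnl]
  set A := ‖l‖ ^ 2 with hA
  set r := ‖ξ‖ ^ 2 with hr
  have hn' : (0:ℝ) < n := Nat.cast_pos.mpr hn
  set c : ℝ := -l.re / n with hc
  have hcpos : 0 < c := div_pos (neg_pos.mpr hl) hn'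
  have harg : l.re * r / n = -(c * r) := by rw [hc]; ring
  have key := key_ineq c hcpos r
  have hA0 : 0 ≤ A := by positivity
  calc 2 * A * r / n ^ 2 * Real.exp (l.re * r / n)
      = (2 * A / n ^ 2) * (r * Real.exp (-(c * r))) := by rw [harg]; ring
    _ ≤ (2 * A / n ^ 2) * (1 / (c * Real.exp 1)) := by
        apply mul_le_mul_of_nonneg_left key (by positivity)
    _ = 2 * A / (n * Real.exp 1 * |l.re|) := by
        have hnne : (n : ℝ) ≠ 0 := hn'.ne'
        rw [abs_of_neg hl, hc]
        field_simp

lemma part3 (l : ℂ) (hl : l.re < 0) (n : ℕ) (hn : 0 < n) :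
    (⨆ ξ : EuclideanSpace ℝ (Fin n), ‖gnl n l ξ‖) =
      2 * ‖l‖ ^ 2 / (n * Real.exp 1 * |l.re|) := by
  have hn' : (0:ℝ) < n := Nat.cast_pos.mpr hn
  have hre : l.re ≠ 0 := hl.ne
  apply le_antisymm
  · exact ciSup_le (abs_gnl_le l hl n hn)
  · set t : ℝ := Real.sqrt ((n : ℝ) / (-l.re)) with ht
    set ξ0 : EuclideanSpace ℝ (Fin n) := EuclideanSpace.single ⟨0, hn⟩ t with hξ0
    have hnorm : ‖ξ0‖ ^ 2 = (n : ℝ) / (-l.re) := by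
      rw [hξ0, EuclideanSpace.norm_single, Real.norm_eq_abs, sq_abs, ht,
        Real.sq_sqrt (div_pos hn' (neg_pos.mpr hl)).le]
    have hval : ‖gnl n l ξ0‖ =
        2 * ‖l‖ ^ 2 / (n * Real.exp 1 * |l.re|) := by
      rw [abs_gnl, hnorm]
      have harg : l.re * ((n : ℝ) / (-l.re)) / n = -1 := by
        field_simp
      rw [harg, Real.exp_neg, abs_of_neg hl]
      field_simp
    rw [← hval]
    exact le_ciSup ⟨_, Set.forall_mem_range.mpr (abs_gnl_le l hl n hn)⟩ ξ0

/-- For `λ ∈ ℂ` with `Re λ < 0`: `(λ - ½Δ) f_{n,λ} = g_{n,λ}`, `‖f_{n,λ}‖_∞ = 1`, and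
`‖g_{n,λ}‖_∞ = 2|λ|²/(n e |Re λ|)`; in particular `‖(λ - ½Δ) f_{n,λ}‖_∞ → 0` as
`n → ∞`. -/
theorem stmt9 (l : ℂ) (hl : l.re < 0) :
    (∀ n : ℕ, 0 < n → ∀ ξ : EuclideanSpace ℝ (Fin n),
      l * fnl n l ξ - (1 / 2) * lap (fnl n l) ξ = gnl n l ξ) ∧
    (∀ n : ℕ, 0 < n → (⨆ ξ : EuclideanSpace ℝ (Fin n), ‖fnl n l ξ‖) = 1) ∧
    (∀ n : ℕ, 0 < n → (⨆ ξ : EuclideanSpace ℝ (Fin n), ‖gnl n l ξ‖) =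
      2 * ‖l‖ ^ 2 / (n * Real.exp 1 * |l.re|)) ∧
    Tendsto (fun n : ℕ => ⨆ ξ : EuclideanSpace ℝ (Fin n),
        ‖l * fnl n l ξ - (1 / 2) * lap (fnl n l) ξ‖) atTop (𝓝 0) := by
  refine ⟨fun n hn => part1 l n hn, fun n hn => part2 l hl n hn,
    fun n hn => part3 l hl n hn, ?_⟩
  have heq : ∀ᶠ n : ℕ in atTop,
      (fun n : ℕ => (2 * ‖l‖ ^ 2 / (Real.exp 1 * |l.re|)) * (1 / n)) n =
      (fun n : ℕ => ⨆ ξ : EuclideanSpace ℝ (Fin n),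
        ‖l * fnl n l ξ - (1 / 2) * lap (fnl n l) ξ‖) n := by
    filter_upwards [eventually_gt_atTop 0] with n hn
    have h1 : (fun ξ : EuclideanSpace ℝ (Fin n) =>
        ‖l * fnl n l ξ - (1 / 2) * lap (fnl n l) ξ‖) =
        fun ξ => ‖gnl n l ξ‖ := by
      funext ξ; rw [part1 l n hn]
    rw [h1, part3 l hl n hn]
    ring
  apply Tendsto.congr' heq
  have := tendsto_one_div_atTop_nhds_zero_nat.const_mul
    (2 * ‖l‖ ^ 2 / (Real.exp 1 * |l.re|))
  simpa using this
end

section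
/- Let S be a C0-semigroup on a Banach space E, μ_t a family of Borel probability measures on E, and define the Ornstein–Uhlenbeck operators P(t)f(x) := ∫_E f(S(t)x + y) dμ_t(y) on BUC(E). If V_n : BUC(E) → BUC(E) are the isometries V_n f(x) := f(x/n), then for every f ∈ BUC(E) and every t ≥ 0, lim_{n→∞} ‖V_n^{-1} P(t) V_n f - R(t)f‖_∞ = 0, where R(t)f := f ∘ S(t). -/
open Filter Topology MeasureTheory

/-! By linearity of `S t`, the rescaled operator is `x ↦ ∫ f (S t x + n⁻¹ • y) dμ_t(y)`. Given `ε`,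
uniform continuity of `f` yields `δ` with `|f (z + n⁻¹ • y) - f z| ≤ ε` whenever `‖n⁻¹ • y‖ < δ`,
and on the remaining set the integrand is at most `2 sup |f|`. Hence the error is at most
`ε + 2 sup |f| · μ_t {y | n δ ≤ ‖y‖}` uniformly in `x`, and the last measure tends to `0`
because a single finite measure is tight at infinity. -/

section
variable {E : Type*} [NormedAddCommGroup E] [NormedSpace ℝ E] [MeasurableSpace E] [BorelSpace E]

lemma tendsto_measure_setOf_le_norm_smul (μ : Measure E) [IsFiniteMeasure μ] {δ : ℝ} (hδ : 0 < δ) :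
    Tendsto (fun r : ℝ => μ {y | δ ≤ ‖r • y‖}) (𝓝 0) (𝓝 0) := by
  have hlim (y : E) : ∀ᶠ r in 𝓝 (0 : ℝ), y ∈ {y | δ ≤ ‖r • y‖} ↔ y ∈ (∅ : Set E) := by
    have : Tendsto (fun r : ℝ => r • y) (𝓝 0) (𝓝 0) :=
      (continuous_id.smul continuous_const).tendsto' _ _ (zero_smul ℝ y)
    filter_upwards [this (Metric.ball_mem_nhds 0 hδ)] with r hr
    simpa using mem_ball_zero_iff.mp hr
  simpa using tendsto_measure_of_tendsto_indicator_of_isFiniteMeasure (𝓝 0) μ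
    (fun r => measurableSet_le measurable_const (measurable_const_smul r).norm) hlim

lemma abs_integral_comp_add_smul_sub_le (μ : Measure E) [IsProbabilityMeasure μ] {f : E → ℝ}
    (hfc : Continuous f) {C ε δ : ℝ} (hε : 0 ≤ ε) (hC : ∀ x, |f x| ≤ C)
    (hf : ∀ a b, dist a b < δ → dist (f a) (f b) < ε) (z : E) (r : ℝ) :
    |∫ y, f (z + r • y) ∂μ - f z| ≤ ε + 2 * C * μ.real {y | δ ≤ ‖r • y‖} := by
  set A := {y : E | δ ≤ ‖r • y‖}
  have hA : MeasurableSet A := measurableSet_le measurable_const (measurable_const_smul r).norm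
  have hint : Integrable (fun y => f (z + r • y)) μ :=
    (integrable_const C).mono' (hfc.comp (by fun_prop)).aestronglyMeasurable
      (ae_of_all _ fun y => hC _)
  have hbound (y : E) : |f (z + r • y) - f z| ≤ ε + A.indicator (fun _ => 2 * C) y := by
    by_cases hy : y ∈ A
    · rw [Set.indicator_of_mem hy]
      linarith [abs_sub (f (z + r • y)) (f z), hC (z + r • y), hC z]
    · rw [Set.indicator_of_notMem hy]
      have hclose : dist (z + r • y) z < δ := by simpa [A] using hy
      simpa [Real.dist_eq] using (hf _ _ hclose).le
  calc |∫ y, f (z + r • y) ∂μ - f z|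
      = |∫ y, (f (z + r • y) - f z) ∂μ| := by
        rw [integral_sub hint (integrable_const _), integral_const, probReal_univ, one_smul]
    _ ≤ ∫ y, |f (z + r • y) - f z| ∂μ := abs_integral_le_integral_abs
    _ ≤ ∫ y, (ε + A.indicator (fun _ => 2 * C) y) ∂μ :=
        integral_mono_of_nonneg (ae_of_all _ fun y => abs_nonneg _)
          ((integrable_const _).add ((integrable_const _).indicator hA)) (ae_of_all _ hbound)
    _ = ε + 2 * C * μ.real A := by
        rw [integral_add (integrable_const _) ((integrable_const _).indicator hA), integral_const,
          integral_indicator_const _ hA, probReal_univ, one_smul, smul_eq_mul, mul_comm]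

theorem tendstoUniformly_integral_comp_add_smul (μ : Measure E) [IsProbabilityMeasure μ]
    {f : E → ℝ} (hfu : UniformContinuous f) (hfb : ∃ C, ∀ x, |f x| ≤ C) :
    TendstoUniformly (fun (r : ℝ) z => ∫ y, f (z + r • y) ∂μ) f (𝓝 0) := by
  obtain ⟨C, hC⟩ := hfb
  rw [Metric.tendstoUniformly_iff]
  intro ε hε
  obtain ⟨δ, hδ, hf⟩ := Metric.uniformContinuous_iff.mp hfu (ε / 2) (half_pos hε)
  have htail : Tendsto (fun r : ℝ => 2 * C * μ.real {y | δ ≤ ‖r • y‖}) (𝓝 0) (𝓝 0) := by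
    simpa [measureReal_def] using ((ENNReal.tendsto_toReal ENNReal.zero_ne_top).comp
      (tendsto_measure_setOf_le_norm_smul μ hδ)).const_mul (2 * C)
  filter_upwards [htail.eventually_lt_const (half_pos hε)] with r hr z
  rw [Real.dist_eq, abs_sub_comm]
  linarith [abs_integral_comp_add_smul_sub_le μ hfu.continuous (half_pos hε).le hC hf z r]

end

lemma tendsto_iSup_abs_sub_of_tendstoUniformly {ι α : Type*} {F : ι → α → ℝ} {f : α → ℝ}
    {l : Filter ι} (h : TendstoUniformly F f l) :
    Tendsto (fun i => ⨆ x, |F i x - f x|) l (𝓝 0) := by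
  rw [Metric.tendsto_nhds]
  intro ε hε
  filter_upwards [Metric.tendstoUniformly_iff.mp h (ε / 2) (half_pos hε)] with i hi
  have hsup : ⨆ x, |F i x - f x| ≤ ε / 2 :=
    Real.iSup_le (fun x => by simpa [Real.dist_eq, abs_sub_comm] using (hi x).le) (half_pos hε).le
  rw [Real.dist_eq, sub_zero, abs_of_nonneg (Real.iSup_nonneg fun _ => abs_nonneg _)]
  linarith

theorem stmt11_general {E : Type*} [NormedAddCommGroup E] [NormedSpace ℝ E]
    [MeasurableSpace E] [BorelSpace E]
    (S : ℝ → E →L[ℝ] E)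
    (μ : ℝ → Measure E) (hμ : ∀ r, IsProbabilityMeasure (μ r))
    (f : E → ℝ) (hfu : UniformContinuous f) (hfb : ∃ C, ∀ x, |f x| ≤ C)
    (t : ℝ) :
    Tendsto (fun n : ℕ => ⨆ x : E,
        |(∫ y, f ((n : ℝ)⁻¹ • (S t ((n : ℝ) • x) + y)) ∂(μ t)) - f (S t x)|)
      atTop (𝓝 0) := by
  have hrescale : ∀ᶠ n : ℕ in atTop, ∀ x y : E,
      (n : ℝ)⁻¹ • (S t ((n : ℝ) • x) + y) = S t x + (n : ℝ)⁻¹ • y := by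
    filter_upwards [eventually_ne_atTop 0] with n hn x y
    rw [map_smul, smul_add, inv_smul_smul₀ (Nat.cast_ne_zero.mpr hn)]
  have hunif : TendstoUniformly (fun (n : ℕ) x => ∫ y, f (S t x + (n : ℝ)⁻¹ • y) ∂(μ t))
      (f ∘ S t) atTop := fun u hu =>
    tendsto_inv_atTop_nhds_zero_nat.eventually
      (((tendstoUniformly_integral_comp_add_smul (μ t) hfu hfb).comp (S t)) u hu)
  refine (tendsto_iSup_abs_sub_of_tendstoUniformly hunif).congr' ?_
  filter_upwards [hrescale] with n hn
  simp only [hn, Function.comp_apply]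

/-- Let `S` be a `C₀`-semigroup on a Banach space `E`, `μ t` Borel probability measures,
and `P(t)f(x) = ∫ f(S(t)x + y) dμ_t(y)` the Ornstein–Uhlenbeck operators on `BUC(E)`.
With the isometries `Vₙ f(x) = f(x/n)`, for every `f ∈ BUC(E)` and `t ≥ 0`:
`‖Vₙ⁻¹ P(t) Vₙ f - R(t) f‖_∞ → 0` as `n → ∞`, where
`(Vₙ⁻¹ P(t) Vₙ f)(x) = ∫ f(n⁻¹(S(t)(n x) + y)) dμ_t(y)` and `R(t)f = f ∘ S(t)`. -/
theorem stmt11 {E : Type*} [NormedAddCommGroup E] [NormedSpace ℝ E] [CompleteSpace E]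
    [MeasurableSpace E] [BorelSpace E]
    (S : ℝ → E →L[ℝ] E)
    (hS0 : S 0 = 1)
    (hSadd : ∀ t ≥ (0:ℝ), ∀ u ≥ (0:ℝ), S (t + u) = (S t).comp (S u))
    (hScont : ∀ x : E, ContinuousOn (fun r => S r x) (Set.Ici (0:ℝ)))
    (μ : ℝ → Measure E) (hμ : ∀ r, IsProbabilityMeasure (μ r))
    (f : E → ℝ) (hfu : UniformContinuous f) (hfb : ∃ C, ∀ x, |f x| ≤ C)
    (t : ℝ) (ht : 0 ≤ t) :
    Tendsto (fun n : ℕ => ⨆ x : E,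
        |(∫ y, f ((n : ℝ)⁻¹ • (S t ((n : ℝ) • x) + y)) ∂(μ t)) - f (S t x)|)
      atTop (𝓝 0) :=
  stmt11_general S μ hμ f hfu hfb t
end
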